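/- arXiv:2503.08873 — 5 statements merged into one kernel-verified Lean document; each statement's English description precedes it below -/
import Mathlib

section
/- With the notation of the previous statement, the pair (T, θ) is an infinitesimal multiplicative form with values in End V: for all α, β ∈ Γ(A) it satisfies (C.1) T([α,β]) = L^A_α T(β) − L^A_β T(α), where L^A_α acts on End(V)-valued 1-forms by (L^A_α S)(X)·ξ = ∇^A_α(S(X)ξ) − S(X)∇^A_α ξ − S([ρ(α),X])ξ. -/
/-- The `A`-invariance form `T(α)(X)ξ = ∇_X ∇ᴬ_α ξ − ∇ᴬ_α ∇_X ξ + ∇_{[ρα,X]} ξ`. -/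
def Tform {𝔛 A V : Type*} [LieRing 𝔛] [AddCommGroup V]
    (nab : 𝔛 →+ V →+ V) (nabA : A → V →+ V) (ρ : A → 𝔛)
    (α : A) (X : 𝔛) (ξ : V) : V :=
  nab X (nabA α ξ) - nabA α (nab X ξ) + nab ⁅ρ α, X⁆ ξ

/-- The `A`-invariance form `(T, θ)` of a connection `∇` on a representation
`(V, ∇ᴬ)` of a Lie algebroid satisfies the cocycle condition (C.1):
`T[α,β] = L^A_α T(β) − L^A_β T(α)`. -/
theorem stmt6 {𝔛 A V : Type*} [LieRing 𝔛] [LieRing A] [AddCommGroup V]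
    (ρ : A → 𝔛) (hρ : ∀ α β : A, ρ ⁅α, β⁆ = ⁅ρ α, ρ β⁆)
    (nab : 𝔛 →+ V →+ V) (nabA : A → V →+ V)
    (hflat : ∀ (α β : A) (ξ : V),
      nabA ⁅α, β⁆ ξ = nabA α (nabA β ξ) - nabA β (nabA α ξ)) :
    ∀ (α β : A) (X : 𝔛) (ξ : V),
      Tform nab nabA ρ ⁅α, β⁆ X ξ
        = (nabA α (Tform nab nabA ρ β X ξ) - Tform nab nabA ρ β X (nabA α ξ)
            - Tform nab nabA ρ β ⁅ρ α, X⁆ ξ)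
          - (nabA β (Tform nab nabA ρ α X ξ) - Tform nab nabA ρ α X (nabA β ξ)
            - Tform nab nabA ρ α ⁅ρ β, X⁆ ξ) := by
  intro α β X ξ
  simp only [Tform, hρ, lie_lie, hflat, map_sub, map_add, AddMonoidHom.sub_apply, AddMonoidHom.add_apply]
  abel
end

section
/- Let 𝔨 → M be a Lie algebra bundle with a bracket-preserving connection ∇ and suppose F ∈ Ω²(M;𝔨) satisfies R^∇ = −ad F, i.e. R^∇(X,Y)·ξ = [ξ, F(X,Y)] for all ξ. Then the 3-form d^∇ F is centre-valued: [ξ, (d^∇ F)(X,Y,Z)] = 0 for all sections ξ of 𝔨 and vector fields X, Y, Z. -/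
/-- For a bracket-preserving connection `∇` on a Lie algebra bundle `𝔨` and
`F ∈ Ω²(M;𝔨)` with `R^∇ = −ad F` (i.e. `R^∇(X,Y)ξ = [ξ, F(X,Y)]`), the 3-form
`d^∇F` is centre-valued: `[ξ, (d^∇F)(X,Y,Z)] = 0`. -/
theorem stmt9 {𝔛 K : Type*} [LieRing 𝔛] [LieRing K]
    (nab : 𝔛 →+ K →+ K)
    (hpre : ∀ (X : 𝔛) (ξ η : K), nab X ⁅ξ, η⁆ = ⁅nab X ξ, η⁆ + ⁅ξ, nab X η⁆)
    (F : 𝔛 → 𝔛 → K) (hFalt : ∀ X Y, F X Y = - F Y X)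
    (hRF : ∀ (X Y : 𝔛) (ξ : K),
      nab X (nab Y ξ) - nab Y (nab X ξ) - nab ⁅X, Y⁆ ξ = ⁅ξ, F X Y⁆) :
    ∀ (ξ : K) (X Y Z : 𝔛),
      ⁅ξ, nab X (F Y Z) - nab Y (F X Z) + nab Z (F X Y)
            - F ⁅X, Y⁆ Z + F ⁅X, Z⁆ Y - F ⁅Y, Z⁆ X⁆ = 0 := by
  intro ξ X Y Z
  have h1 : ∀ (W : 𝔛) (A : K), ⁅ξ, nab W A⁆ = nab W ⁅ξ, A⁆ - ⁅nab W ξ, A⁆ := by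
    intro W A
    rw [hpre W ξ A]; abel
  simp only [lie_sub, lie_add, h1, ← hRF]
  simp only [lie_lie, map_sub, map_add, AddMonoidHom.sub_apply, AddMonoidHom.add_apply]
  have e1 : (⁅X, ⁅Z, Y⁆⁆ : 𝔛) = -⁅X, ⁅Y, Z⁆⁆ := by rw [(lie_skew Z Y).symm, lie_neg]
  have e2 : (⁅Y, ⁅Z, X⁆⁆ : 𝔛) = -⁅Y, ⁅X, Z⁆⁆ := by rw [(lie_skew Z X).symm, lie_neg]
  have e3 : (⁅Z, ⁅Y, X⁆⁆ : 𝔛) = -⁅Z, ⁅X, Y⁆⁆ := by rw [(lie_skew Y X).symm, lie_neg]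
  have e4 : (⁅Z, ⁅X, Y⁆⁆ : 𝔛) = ⁅Y, ⁅X, Z⁆⁆ - ⁅X, ⁅Y, Z⁆⁆ := by
    rw [(lie_skew Z ⁅X, Y⁆).symm, lie_lie]; abel
  simp only [e1, e2, e3, e4, map_neg, map_sub, AddMonoidHom.neg_apply,
    AddMonoidHom.sub_apply]
  abel
end

section
/- Let 𝔨 → M be a Lie algebra bundle with bracket-preserving connection ∇, let F ∈ Ω²(M;𝔨) satisfy R^∇ = −ad F, and let γ ∈ Ω¹(M;𝔨). Define the deformed connection ∇^γ ξ = ∇ξ + [ξ, γ] and deformed form F^γ = F + d^∇γ − ½[γ,γ]. Then the 3-curvature is unchanged: d^{∇^γ} F^γ = d^∇ F. -/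
variable {𝕜 𝔛 K : Type*}

/-- Exterior covariant derivative of a `K`-valued 2-form with respect to a
(possibly deformed) connection given as a plain map. -/
def dTwoP [LieRing 𝔛] [AddCommGroup K]
    (nabP : 𝔛 → K → K) (F : 𝔛 → 𝔛 → K) : 𝔛 → 𝔛 → 𝔛 → K := fun X Y Z =>
  nabP X (F Y Z) - nabP Y (F X Z) + nabP Z (F X Y)
    - F ⁅X, Y⁆ Z + F ⁅X, Z⁆ Y - F ⁅Y, Z⁆ X

/-- Cyclic form of the Jacobi identity used below. -/
lemma jac_aux {L : Type*} [LieRing L] (a b c : L) :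
    ⁅⁅b, c⁆, a⁆ = ⁅⁅a, c⁆, b⁆ - ⁅⁅a, b⁆, c⁆ := by
  rw [← lie_skew ⁅b, c⁆ a, leibniz_lie, ← lie_skew b ⁅a, c⁆]
  abel

/-- For a bracket-preserving connection `∇` on a Lie algebra bundle `𝔨`, a curving
`F` with `R^∇ = −ad F`, and `γ ∈ Ω¹(M;𝔨)`, the deformed connection `∇^γ ξ = ∇ξ + [ξ,γ]`
and the deformed form `F^γ = F + d^∇γ − ½[γ,γ]` have the same curvature 3-form:
`d^{∇^γ} F^γ = d^∇ F`. -/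
theorem stmt12 [Field 𝕜] [CharZero 𝕜] [LieRing 𝔛] [LieAlgebra 𝕜 𝔛]
    [LieRing K] [LieAlgebra 𝕜 K]
    (nab : 𝔛 →+ K →+ K)
    (hpre : ∀ (X : 𝔛) (ξ η : K), nab X ⁅ξ, η⁆ = ⁅nab X ξ, η⁆ + ⁅ξ, nab X η⁆)
    (F : 𝔛 → 𝔛 → K) (hFalt : ∀ X Y, F X Y = - F Y X)
    (hRF : ∀ (X Y : 𝔛) (ξ : K),
      nab X (nab Y ξ) - nab Y (nab X ξ) - nab ⁅X, Y⁆ ξ = ⁅ξ, F X Y⁆)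
    (γ : 𝔛 →ₗ[𝕜] K) :
    ∀ X Y Z : 𝔛,
      dTwoP (fun W ξ => nab W ξ + ⁅ξ, γ W⁆)
        (fun X Y => F X Y + (nab X (γ Y) - nab Y (γ X) - γ ⁅X, Y⁆)
          - (2 : 𝕜)⁻¹ • ((2 : ℤ) • ⁅γ X, γ Y⁆)) X Y Z
      = dTwoP (fun W ξ => nab W ξ) F X Y Z := by
  have hhalf : ∀ x : K, (2 : 𝕜)⁻¹ • ((2 : ℤ) • x) = x := by
    intro x
    rw [(Int.cast_smul_eq_zsmul 𝕜 2 x).symm, smul_smul]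
    norm_num
  intro X Y Z
  have c1 : ⁅nab Y (γ Z), γ X⁆ = -⁅γ X, nab Y (γ Z)⁆ := (lie_skew _ _).symm
  have c2 : ⁅nab Z (γ Y), γ X⁆ = -⁅γ X, nab Z (γ Y)⁆ := (lie_skew _ _).symm
  have c3 : ⁅nab X (γ Z), γ Y⁆ = -⁅γ Y, nab X (γ Z)⁆ := (lie_skew _ _).symm
  have e1 : ⁅F Y Z, γ X⁆
      = -(nab Y (nab Z (γ X)) - nab Z (nab Y (γ X)) - nab ⁅Y, Z⁆ (γ X)) := by
    rw [hRF]; exact (lie_skew _ _).symm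
  have e2 : ⁅F X Z, γ Y⁆
      = -(nab X (nab Z (γ Y)) - nab Z (nab X (γ Y)) - nab ⁅X, Z⁆ (γ Y)) := by
    rw [hRF]; exact (lie_skew _ _).symm
  have e3 : ⁅F X Y, γ Z⁆
      = -(nab X (nab Y (γ Z)) - nab Y (nab X (γ Z)) - nab ⁅X, Y⁆ (γ Z)) := by
    rw [hRF]; exact (lie_skew _ _).symm
  have jac : ⁅⁅γ Y, γ Z⁆, γ X⁆ = ⁅⁅γ X, γ Z⁆, γ Y⁆ - ⁅⁅γ X, γ Y⁆, γ Z⁆ :=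
    jac_aux _ _ _
  have gjac : γ ⁅⁅Y, Z⁆, X⁆ = γ ⁅⁅X, Z⁆, Y⁆ - γ ⁅⁅X, Y⁆, Z⁆ := by
    rw [← map_sub, jac_aux]
  simp only [dTwoP, hhalf, map_add, map_sub, lie_add, add_lie, lie_sub, sub_lie, hpre]
  rw [c1, c2, c3, e1, e2, e3, jac, gjac]
  abel
end

section
/- Let A ⇒ M be a Lie algebroid and 𝔨 ⊂ ker ρ a bundle of ideals. Suppose (c₀, c₁) is an infinitesimal multiplicative (IM) 𝔨-valued q-form, i.e. it satisfies (C.1) c₀[α₁,α₂] = L^A_{α₁} c₀(α₂) − L^A_{α₂} c₀(α₁), is horizontal (c₁|_𝔨 = 0), and the restriction c₁ is tensorial. Assume that the fibres of 𝔨 are semisimple, so that ad : 𝔨 → Der(𝔨) is a fibrewise isomorphism. If γ ∈ Ω^q(M;𝔨) is the unique form with [ξ, γ] = L(ξ) := c₀(ξ) for all ξ ∈ Γ(𝔨) (using that by (C.1) applied to 𝔨-sections, c₀|_𝔨 is derivation-valued), then ι_{ρ(α)} γ and c₁(α) satisfy [ξ, ι_{ρ(α)}γ] = [ξ, c₁(α)]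 for all ξ ∈ Γ(𝔨) and α ∈ Γ(A); hence ι_{ρ(α)}γ = c₁(α) by triviality of the centre. -/
/-- Let `(c₀, c₁)` be a horizontal IM `q`-form for a bundle of ideals `𝔨 ⊂ ker ρ`
on a Lie algebroid `A` (condition (C.2), horizontality `c₁|_𝔨 = 0`), with `𝔨`
having semisimple fibres (encoded by triviality of the centre).  If `γ` is the
(unique) `𝔨`-valued `q`-form with `[ξ, γ] = c₀(ξ)` for all sections `ξ` of `𝔨`,
then `[ξ, ι_{ρ(α)} γ] = [ξ, c₁(α)]` for all `ξ`, `α`; hence `ι_{ρ(α)} γ = c₁(α)`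
by triviality of the centre. -/
theorem stmt16 {𝕜 A 𝔛 : Type*} [Field 𝕜] [LieRing A] [LieAlgebra 𝕜 A] [LieRing 𝔛]
    (K : LieIdeal 𝕜 A) (q : ℕ)
    (ρ : A → 𝔛) (hρK : ∀ ξ ∈ K, ρ ξ = 0)
    (c0 : A → (Fin (q + 1) → 𝔛) → A) (c1 : A → (Fin q → 𝔛) → A)
    (hc0K : ∀ (α : A) (u : Fin (q + 1) → 𝔛), c0 α u ∈ K)
    (hc1K : ∀ (α : A) (w : Fin q → 𝔛), c1 α w ∈ K)
    (hhor : ∀ ξ ∈ K, ∀ w : Fin q → 𝔛, c1 ξ w = 0)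
    (hC2 : ∀ ξ ∈ K, ∀ (α : A) (w : Fin q → 𝔛),
      c1 ⁅ξ, α⁆ w = ⁅ξ, c1 α w⁆ - c0 ξ (Fin.cons (ρ α) w))
    (hcenter : ∀ η ∈ K, (∀ ξ ∈ K, ⁅ξ, η⁆ = 0) → η = 0)
    (γ : (Fin (q + 1) → 𝔛) → A) (hγK : ∀ u, γ u ∈ K)
    (hγ : ∀ ξ ∈ K, ∀ u : Fin (q + 1) → 𝔛, ⁅ξ, γ u⁆ = c0 ξ u) :
    (∀ ξ ∈ K, ∀ (α : A) (w : Fin q → 𝔛),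
        ⁅ξ, γ (Fin.cons (ρ α) w)⁆ = ⁅ξ, c1 α w⁆)
      ∧ ∀ (α : A) (w : Fin q → 𝔛), γ (Fin.cons (ρ α) w) = c1 α w := by
  have key : ∀ ξ ∈ K, ∀ (α : A) (w : Fin q → 𝔛),
      ⁅ξ, γ (Fin.cons (ρ α) w)⁆ = ⁅ξ, c1 α w⁆ := by
    intro ξ hξ α w
    have hmem : ⁅ξ, α⁆ ∈ K := lie_mem_left 𝕜 A K ξ α hξ
    have h1 := hC2 ξ hξ α w
    rw [hhor _ hmem w] at h1
    have h2 := hγ ξ hξ (Fin.cons (ρ α) w)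
    rw [h2]
    exact (sub_eq_zero.mp h1.symm).symm
  refine ⟨key, fun α w => ?_⟩
  have hη : γ (Fin.cons (ρ α) w) - c1 α w ∈ K := K.sub_mem (hγK _) (hc1K α w)
  have := hcenter _ hη (fun ξ hξ => by
    rw [lie_sub, key ξ hξ α w, sub_self])
  exact sub_eq_zero.mp this
end

section
/- Let B ⇒ M be a Lie algebroid with anchor ρ_B, let (𝔨, [·,·]_𝔨) be a Lie algebra bundle over M, let ∇ be a bracket-preserving connection on 𝔨 and F ∈ Ω²(M;𝔨) with R^∇ = −ad F and ι_{ρ_B(α)} d^∇F = 0 for all α ∈ Γ(B). Then the bracket on Γ(B ⊕ 𝔨) defined by [(α,ξ),(β,η)] = ([α,β]_B, ∇_{ρ_B(α)}η − ∇_{ρ_B(β)}ξ + [ξ,η]_𝔨 − F(ρ_B(α), ρ_B(β))), together with anchor (α,ξ) ↦ ρ_B(α), satisfies the Jacobi identity and the Leibniz rule, making A = B ⊕ 𝔨 a Lie algebroid. -/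
variable {𝕜 R B K : Type*}

/-- The coupling bracket on `B ⊕ 𝔨`:
`[(α,ξ),(β,η)] = ([α,β]_B, ∇_{ρ(α)}η − ∇_{ρ(β)}ξ + [ξ,η]_𝔨 − F(ρ(α),ρ(β)))`. -/
def cplBr [CommRing 𝕜] [CommRing R] [Algebra 𝕜 R]
    [LieRing B] [Module R B] [LieRing K] [Module R K]
    (ρB : B →ₗ[R] Derivation 𝕜 R R)
    (nab : Derivation 𝕜 R R →+ K →+ K)
    (F : Derivation 𝕜 R R → Derivation 𝕜 R R → K)
    (x y : B × K) : B × K :=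
  (⁅x.1, y.1⁆, nab (ρB x.1) y.2 - nab (ρB y.1) x.2 + ⁅x.2, y.2⁆ - F (ρB x.1) (ρB y.1))

/-- Coupling construction: given a Lie algebroid `B ⇒ M` (vector fields modelled as
derivations of the function ring `R`), a Lie algebra bundle `𝔨` (sections `K`) with a
bracket-preserving connection `∇` and `F ∈ Ω²(M;𝔨)` such that `R^∇ = −ad F` and
`ι_{ρ_B(α)} d^∇F = 0`, the bracket on `B ⊕ 𝔨` defined above satisfies the Jacobi
identity and the Leibniz rule, making `A = B ⊕ 𝔨` a Lie algebroid. -/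
theorem stmt17 [CommRing 𝕜] [CommRing R] [Algebra 𝕜 R]
    [LieRing B] [Module R B] [LieRing K] [Module R K]
    (ρB : B →ₗ[R] Derivation 𝕜 R R)
    (hρbr : ∀ α β : B, ρB ⁅α, β⁆ = ⁅ρB α, ρB β⁆)
    (hBleib : ∀ (f : R) (α β : B), ⁅α, f • β⁆ = f • ⁅α, β⁆ + (ρB α f) • β)
    (hKbil : ∀ (f : R) (ξ η : K), ⁅f • ξ, η⁆ = f • ⁅ξ, η⁆)
    (nab : Derivation 𝕜 R R →+ K →+ K)
    (hnLeib : ∀ (X : Derivation 𝕜 R R) (f : R) (ξ : K),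
      nab X (f • ξ) = f • nab X ξ + (X f) • ξ)
    (hnlinX : ∀ (f : R) (X : Derivation 𝕜 R R) (ξ : K),
      nab (f • X) ξ = f • nab X ξ)
    (hpre : ∀ (X : Derivation 𝕜 R R) (ξ η : K),
      nab X ⁅ξ, η⁆ = ⁅nab X ξ, η⁆ + ⁅ξ, nab X η⁆)
    (F : Derivation 𝕜 R R → Derivation 𝕜 R R → K)
    (hFalt : ∀ X Y, F X Y = - F Y X)
    (hFlin1 : ∀ (f : R) (X Y : Derivation 𝕜 R R), F (f • X) Y = f • F X Y)
    (hFlin2 : ∀ (f : R) (X Y : Derivation 𝕜 R R), F X (f • Y) = f • F X Y)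
    (hRF : ∀ (X Y : Derivation 𝕜 R R) (ξ : K),
      nab X (nab Y ξ) - nab Y (nab X ξ) - nab ⁅X, Y⁆ ξ = ⁅ξ, F X Y⁆)
    (hdF : ∀ (α : B) (Y Z : Derivation 𝕜 R R),
      nab (ρB α) (F Y Z) - nab Y (F (ρB α) Z) + nab Z (F (ρB α) Y)
        - F ⁅ρB α, Y⁆ Z + F ⁅ρB α, Z⁆ Y - F ⁅Y, Z⁆ (ρB α) = 0) :
    (∀ x y z : B × K,
        cplBr ρB nab F x (cplBr ρB nab F y z)
          + cplBr ρB nab F y (cplBr ρB nab F z x)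
          + cplBr ρB nab F z (cplBr ρB nab F x y) = 0)
      ∧ (∀ (f : R) (x y : B × K),
          cplBr ρB nab F x (f • y) = f • cplBr ρB nab F x y + (ρB x.1 f) • y) := by
  
  have Fneg2 : ∀ (X W : Derivation 𝕜 R R), F X (-W) = - F X W := by
    intro X W
    rw [← neg_one_smul R W, hFlin2, neg_one_smul]
  have Flie2 : ∀ (X Y Z : Derivation 𝕜 R R), F X ⁅Y, Z⁆ = - F X ⁅Z, Y⁆ := by
    intro X Y Z
    rw [← lie_skew Z Y, Fneg2, neg_neg]
  have hKbil2 : ∀ (f : R) (ξ η : K), ⁅ξ, f • η⁆ = f • ⁅ξ, η⁆ := by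
    intro f ξ η
    rw [← lie_skew, hKbil, ← lie_skew η ξ, smul_neg, neg_neg]
  constructor
  · intro x y z
    set X := ρB x.1 with hX
    set Y := ρB y.1 with hY
    set Z := ρB z.1 with hZ
    set ξ := x.2
    set η := y.2
    set ζ := z.2
    have h1 : nab Y (F X Z) = - nab Y (F Z X) := by rw [hFalt X Z, map_neg]
    have h2 : F ⁅Y, Z⁆ X = - F X ⁅Y, Z⁆ := hFalt _ _
    have h3 : F ⁅X, Y⁆ Z = - F Z ⁅X, Y⁆ := hFalt _ _
    have h4 : F ⁅X, Z⁆ Y = F Y ⁅Z, X⁆ := by rw [hFalt, Flie2, neg_neg]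
    simp only [cplBr, hρbr, Prod.mk_add_mk, Prod.mk_eq_zero, map_sub, map_add,
      map_neg, lie_sub, lie_add, lie_neg]
    constructor
    · exact lie_jacobi x.1 y.1 z.1
    · linear_combination (norm := abel1)
        hRF X Y ζ + hRF Y Z ξ + hRF Z X η
        + hpre X η ζ + hpre Y ζ ξ + hpre Z ξ η
        - lie_skew (nab X η) ζ - lie_skew (nab Y ζ) ξ - lie_skew (nab Z ξ) η
        + lie_jacobi ξ η ζ
        - hdF x.1 Y Z - h1 - h2 - h3 + h4
  · intro f x y
    simp only [cplBr, Prod.smul_fst, Prod.smul_snd, Prod.smul_mk, Prod.mk_add_mk,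
      Prod.ext_iff, Prod.fst_add, Prod.snd_add, map_smul, hBleib, hnLeib, hnlinX,
      hKbil2, hFlin2, smul_sub, smul_add]
    exact ⟨trivial, by abel⟩
end
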